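/- Under friend-oriented preferences, the SCC partition is core stable: there is no coalition S ⊆ N such that every agent in S strictly prefers S to its SCC coalition. -/

import Mathlib

open Classical

/-- Directed reachability in the friendship digraph: edge (a,b) iff b ∈ F a. -/
def Reach {α : Type*} (F : α → Finset α) : α → α → Prop :=
  Relation.ReflTransGen fun a b => b ∈ F a

/-- The strongly connected component of agent i. -/
noncomputable def SCC {α : Type*} [Fintype α] (F : α → Finset α) (i : α) : Finset α :=
  Finset.univ.filter fun j => Reach F i j ∧ Reach F j i

/-- Number of friends of i in coalition S. -/
noncomputable def nFriends {α : Type*} [Fintype α] (F : α → Finset α) (i : α)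
    (S : Finset α) : ℕ := (S ∩ F i).card

/-- Number of enemies of i in coalition S. -/
noncomputable def nEnemies {α : Type*} [Fintype α] (F : α → Finset α) (i : α)
    (S : Finset α) : ℕ := (S \ (F i ∪ {i})).card

/-- Friend-oriented strict preference: strictly more friends, or equally many friends
and strictly fewer enemies. -/
def StrictPref {α : Type*} [Fintype α] (F : α → Finset α) (i : α)
    (S T : Finset α) : Prop :=
  nFriends F i S > nFriends F i T ∨
    (nFriends F i S = nFriends F i T ∧ nEnemies F i S < nEnemies F i T)

/-!
A blocking coalition `S` contains a sink `a` of the friendship digraph restricted to `S`: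
every `i ∈ S` reachable from `a` inside `S` reaches `a` back. Such an `i` has all its
friends in `S` inside the SCC of `a`, which is its own SCC, so to prefer `S` it must have
the same friends in both and strictly fewer enemies in `S`. Hence the SCC of `a` is closed
under friend edges out of the part of `S` reachable from `a`, so it lies inside `S`; but
then `a` has at least as many enemies in `S` as in its SCC.
-/

open Relation

theorem Finset.Nonempty.exists_reflTransGen_sink {α : Type*} {r : α → α → Prop} {S : Finset α}
    (hS : S.Nonempty) : ∃ a ∈ S, ∀ b ∈ S, ReflTransGen r a b → ReflTransGen r b a := by
  obtain ⟨a, haS, hmin⟩ := S.exists_minimalFor (fun a => {b | ReflTransGen r a b}) hS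
  refine ⟨a, haS, fun b hbS hab => ?_⟩
  have hreach : {c | ReflTransGen r b c} ⊆ {c | ReflTransGen r a c} :=
    fun _ hbc => hab.trans hbc
  exact hmin hbS hreach ReflTransGen.refl

section FriendOriented

variable {α : Type*} [Fintype α] (F : α → Finset α)

theorem mem_SCC {i j : α} : j ∈ SCC F i ↔ Reach F i j ∧ Reach F j i := by
  simp [SCC]

theorem SCC_eq_of_reach {i j : α} (hij : Reach F i j) (hji : Reach F j i) :
    SCC F i = SCC F j := by
  ext k
  simp only [mem_SCC]
  exact ⟨fun h => ⟨hji.trans h.1, h.2.trans hij⟩, fun h => ⟨hij.trans h.1, h.2.trans hji⟩⟩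

theorem SCC_subset_of_closed {a : α} {P : α → Prop} (ha : P a)
    (hP : ∀ x y, P x → y ∈ F x → y ∈ SCC F a → P y) : ∀ y ∈ SCC F a, P y := by
  suffices h : ∀ y, Reach F a y → Reach F y a → P y from
    fun y hy => h y ((mem_SCC F).1 hy).1 ((mem_SCC F).1 hy).2
  intro y hay hya
  induction hay with
  | refl => exact ha
  | @tail x y hax hxy ih =>
    have hxa : Reach F x a := ReflTransGen.head hxy hya
    exact hP x y (ih hxa) hxy ((mem_SCC F).2 ⟨hax.tail hxy, hya⟩)

theorem nEnemies_mono {i : α} {S T : Finset α} (h : S ⊆ T) :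
    nEnemies F i S ≤ nEnemies F i T :=
  Finset.card_le_card (Finset.sdiff_subset_sdiff h le_rfl)

theorem StrictPref.friends_subset_and_nEnemies_lt {i : α} {S T : Finset α}
    (hpref : StrictPref F i S T) (hST : S ∩ F i ⊆ T) :
    T ∩ F i ⊆ S ∧ nEnemies F i S < nEnemies F i T := by
  have hsub : S ∩ F i ⊆ T ∩ F i := Finset.subset_inter hST Finset.inter_subset_right
  have hle : nFriends F i S ≤ nFriends F i T := Finset.card_le_card hsub
  rcases hpref with hgt | ⟨heq, hlt⟩
  · exact absurd hgt (not_lt.2 hle)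
  · have hfriends : S ∩ F i = T ∩ F i := Finset.eq_of_subset_of_card_le hsub heq.ge
    exact ⟨hfriends ▸ Finset.inter_subset_left, hlt⟩

end FriendOriented

/-- Under friend-oriented preferences the SCC partition is core stable: no nonempty
coalition S is such that every member strictly prefers S to its SCC coalition. -/
theorem scc_partition_core_stable {α : Type*} [Fintype α] (F : α → Finset α) :
    ¬ ∃ S : Finset α, S.Nonempty ∧ ∀ i ∈ S, StrictPref F i S (SCC F i) := by
  rintro ⟨S, hSne, hblock⟩
  set RS : α → α → Prop := ReflTransGen fun x y => y ∈ F x ∧ y ∈ S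
  have hRS_reach : ∀ {x y}, RS x y → Reach F x y :=
    fun h => ReflTransGen.mono (fun _ _ hxy => hxy.1) _ _ h
  obtain ⟨a, haS, hsink⟩ := hSne.exists_reflTransGen_sink (r := fun x y => y ∈ F x ∧ y ∈ S)
  have hmem_S : ∀ {i}, RS a i → i ∈ S := fun h => by
    rcases h.cases_tail with rfl | ⟨_, _, _, hiS⟩
    exacts [haS, hiS]
  have hgain : ∀ i, RS a i → SCC F a ∩ F i ⊆ S ∧ nEnemies F i S < nEnemies F i (SCC F a) := by
    intro i hai
    have hSCC : SCC F i = SCC F a :=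
      (SCC_eq_of_reach F (hRS_reach hai) (hRS_reach (hsink i (hmem_S hai) hai))).symm
    have hfriends : S ∩ F i ⊆ SCC F a := fun j hj => by
      obtain ⟨hjS, hji⟩ := Finset.mem_inter.1 hj
      have haj : RS a j := hai.tail ⟨hji, hjS⟩
      exact (mem_SCC F).2 ⟨hRS_reach haj, hRS_reach (hsink j hjS haj)⟩
    exact hSCC ▸ (hblock i (hmem_S hai)).friends_subset_and_nEnemies_lt F (hSCC ▸ hfriends)
  have hSCC_S : SCC F a ⊆ S := fun y hy => hmem_S <|
    SCC_subset_of_closed F (P := RS a) ReflTransGen.refl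
      (fun x y hax hxy hy => hax.tail ⟨hxy, (hgain x hax).1 (Finset.mem_inter.2 ⟨hy, hxy⟩)⟩) y hy
  exact absurd (nEnemies_mono F hSCC_S) (not_le.2 (hgain a ReflTransGen.refl).2)
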